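/- arXiv:2605.06028 — 2 statements merged into one kernel-verified Lean document; each statement's English description precedes it below -/
import Mathlib

section
/- Let S be a finite nonempty state set with prior ρ : S → ℝ satisfying ρ(s) ≥ 0 and Σ_{s ∈ S} ρ(s) = 1, let A be a finite nonempty action set, and let φ : A × S → ℝ be a utility function. Let (D, σ) and (D', σ') be information structures on S with finite signal sets. If (D', σ') is a garbling of (D, σ), then the expected value of (D', σ') is at most the expected value of (D, σ): Σ_{d' ∈ D'} max_{a ∈ A} Σ_{s ∈ S} φ(a, s) σ'(d'|s) ρ(s) ≤ Σ_{d ∈ D} max_{a ∈ A} Σ_{s ∈ S} φ(a, s) σ(d|s) ρ(s). -/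
open Finset

/-- If (D', σ') is a garbling of (D, σ), then the expected value of
(D', σ') is at most that of (D, σ). -/
theorem garbling_expected_value_le
    {S A D D' : Type*} [Fintype S] [Nonempty S] [Fintype A] [Nonempty A]
    [Fintype D] [Nonempty D] [Fintype D'] [Nonempty D']
    (ρ : S → ℝ) (hρ_nonneg : ∀ s, 0 ≤ ρ s) (hρ_sum : ∑ s, ρ s = 1)
    (φ : A × S → ℝ)
    (σ : D → S → ℝ) (hσ_nonneg : ∀ d s, 0 ≤ σ d s) (hσ_sum : ∀ s, ∑ d, σ d s = 1)
    (σ' : D' → S → ℝ) (hσ'_nonneg : ∀ d' s, 0 ≤ σ' d' s) (hσ'_sum : ∀ s, ∑ d', σ' d' s = 1)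
    (hgarbling : ∃ κ : D → D' → ℝ,
      (∀ d d', 0 ≤ κ d d' ∧ κ d d' ≤ 1) ∧
      (∀ d, ∑ d', κ d d' = 1) ∧
      (∀ d' s, σ' d' s = ∑ d, κ d d' * σ d s)) :
    ∑ d', Finset.univ.sup' Finset.univ_nonempty
        (fun a : A => ∑ s, φ (a, s) * σ' d' s * ρ s)
      ≤ ∑ d, Finset.univ.sup' Finset.univ_nonempty
        (fun a : A => ∑ s, φ (a, s) * σ d s * ρ s) := by
  obtain ⟨κ, hκ01, hκsum, hκσ⟩ := hgarbling
  set f : D → A → ℝ := fun d a => ∑ s, φ (a, s) * σ d s * ρ s with hf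
  have step : ∀ d', Finset.univ.sup' Finset.univ_nonempty
      (fun a : A => ∑ s, φ (a, s) * σ' d' s * ρ s)
      ≤ ∑ d, κ d d' * Finset.univ.sup' Finset.univ_nonempty (f d) := by
    intro d'
    apply Finset.sup'_le
    intro a _
    have : (∑ s, φ (a, s) * σ' d' s * ρ s) = ∑ d, κ d d' * f d a := by
      simp only [hκσ, hf, Finset.mul_sum, Finset.sum_mul]
      rw [Finset.sum_comm]
      exact Finset.sum_congr rfl fun d _ => Finset.sum_congr rfl fun s _ => by ring
    rw [this]
    apply Finset.sum_le_sum
    intro d _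
    exact mul_le_mul_of_nonneg_left
      (Finset.le_sup' (f d) (Finset.mem_univ a)) (hκ01 d d').1
  calc ∑ d', Finset.univ.sup' Finset.univ_nonempty
        (fun a : A => ∑ s, φ (a, s) * σ' d' s * ρ s)
      ≤ ∑ d', ∑ d, κ d d' * Finset.univ.sup' Finset.univ_nonempty (f d) :=
        Finset.sum_le_sum fun d' _ => step d'
    _ = ∑ d, Finset.univ.sup' Finset.univ_nonempty (f d) := by
        rw [Finset.sum_comm]
        congr 1; ext d
        rw [← Finset.sum_mul, hκsum, one_mul]
end

section
/- (Blackwell's informativeness theorem, finite case.) Let S be a finite nonempty state set and let (D, σ) and (D', σ') be information structures on S with finite signal sets. Then the following are equivalent: (1) (D', σ') is a garbling of (D, σ); (2) for every finite nonempty action set A, every utility function φ : A × S → ℝ, and every prior ρ : S → ℝ with ρ(s) ≥ 0 and Σ_{s ∈ S} ρ(s) = 1, the expected value satisfies Σ_{d' ∈ D'} max_{a ∈ A} Σ_{s ∈ S} φ(a, s) σ'(d'|s) ρ(s) ≤ Σ_{d ∈ D} max_{a ∈ A} Σ_{s ∈ S} φ(a, s) σ(d|s) ρ(s). -/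
/-!
Garbling can only lower the value: after a garbled signal the payoff of each action is a
κ-average of its payoffs after the original signals, and the maximum of an average is at most
the average of the maxima. Conversely, the garblings of `σ` form a compact convex set, so if `σ'`
is not one of them, a linear functional separates it strictly. Read that functional as a utility
on actions `D'` (under the uniform prior): the value of `σ` is then the payoff of following a
deterministic garbling of `σ`, a point of the set, while merely following the signal of `σ'`
already earns more.
-/

open Finset

namespace InformationStructure

variable {S D D' A : Type*} [Fintype D]

noncomputable def garble (σ : D → S → ℝ) : (D → D' → ℝ) →ₗ[ℝ] (D' → S → ℝ) where
  toFun κ d' s := ∑ d, κ d d' * σ d s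
  map_add' κ₁ κ₂ := by
    funext d' s
    simp only [Pi.add_apply, add_mul, sum_add_distrib]
  map_smul' c κ := by
    funext d' s
    simp only [Pi.smul_apply, smul_eq_mul, RingHom.id_apply, mul_sum, mul_assoc]

theorem garble_apply (σ : D → S → ℝ) (κ : D → D' → ℝ) (d' : D') (s : S) :
    garble σ κ d' s = ∑ d, κ d d' * σ d s := rfl

section Garblings

variable [Fintype D']

def garblings (σ : D → S → ℝ) : Set (D' → S → ℝ) :=
  garble σ '' Set.univ.pi fun _ => stdSimplex ℝ D'

theorem convex_garblings (σ : D → S → ℝ) : Convex ℝ (garblings (D' := D') σ) :=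
  (convex_pi fun _ _ => convex_stdSimplex ℝ D').linear_image _

theorem isCompact_garblings (σ : D → S → ℝ) : IsCompact (garblings (D' := D') σ) :=
  (isCompact_univ_pi fun _ => isCompact_stdSimplex ℝ D').image
    (garble σ).continuous_of_finiteDimensional

theorem exists_kernel_of_mem_garblings {σ : D → S → ℝ} {σ' : D' → S → ℝ}
    (h : σ' ∈ garblings σ) :
    ∃ κ : D → D' → ℝ, (∀ d d', 0 ≤ κ d d' ∧ κ d d' ≤ 1) ∧ (∀ d, ∑ d', κ d d' = 1) ∧
      ∀ d' s, σ' d' s = ∑ d, κ d d' * σ d s := by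
  obtain ⟨κ, hκ, rfl⟩ := h
  exact ⟨κ, fun d => mem_Icc_of_mem_stdSimplex (hκ d trivial), fun d => (hκ d trivial).2,
    fun _ _ => rfl⟩

end Garblings

variable [Fintype S]

def signalPayoff (φ : A × S → ℝ) (ρ : S → ℝ) (σ : D → S → ℝ) (d : D) (a : A) : ℝ :=
  ∑ s, φ (a, s) * σ d s * ρ s

theorem signalPayoff_garble (φ : A × S → ℝ) (ρ : S → ℝ) (σ : D → S → ℝ) (κ : D → D' → ℝ)
    (d' : D') (a : A) :
    signalPayoff φ ρ (garble σ κ) d' a = ∑ d, κ d d' * signalPayoff φ ρ σ d a := by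
  simp only [signalPayoff, garble_apply, sum_mul, mul_sum]
  rw [sum_comm]
  exact sum_congr rfl fun _ _ => sum_congr rfl fun _ _ => by ring

def expectedValue [Fintype A] [Nonempty A] (φ : A × S → ℝ) (ρ : S → ℝ) (σ : D → S → ℝ) : ℝ :=
  ∑ d, univ.sup' univ_nonempty (signalPayoff φ ρ σ d)

theorem expectedValue_garble_le [Fintype D'] [Fintype A] [Nonempty A] (φ : A × S → ℝ) (ρ : S → ℝ) (σ : D → S → ℝ)
    {κ : D → D' → ℝ} (hκ_nonneg : ∀ d d', 0 ≤ κ d d') (hκ_sum : ∀ d, ∑ d', κ d d' = 1) :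
    expectedValue φ ρ (garble σ κ) ≤ expectedValue φ ρ σ := by
  calc expectedValue φ ρ (garble σ κ)
      ≤ ∑ d', ∑ d, κ d d' * univ.sup' univ_nonempty (signalPayoff φ ρ σ d) := by
        refine sum_le_sum fun d' _ => sup'_le _ _ fun a _ => ?_
        rw [signalPayoff_garble]
        exact sum_le_sum fun d _ =>
          mul_le_mul_of_nonneg_left (le_sup' _ (mem_univ a)) (hκ_nonneg d d')
    _ = expectedValue φ ρ σ := by
        rw [sum_comm]
        exact sum_congr rfl fun d _ => by rw [← sum_mul, hκ_sum, one_mul]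

theorem expectedValue_comp_equiv [Fintype A] [Nonempty A] {B : Type*} [Fintype B] [Nonempty B] (e : B ≃ A)
    (φ : A × S → ℝ) (ρ : S → ℝ) (σ : D → S → ℝ) :
    expectedValue (fun p : B × S => φ (e p.1, p.2)) ρ σ = expectedValue φ ρ σ := by
  simp only [expectedValue, sup'_univ_eq_ciSup]
  exact sum_congr rfl fun d _ => e.surjective.iSup_comp (signalPayoff φ ρ σ d)

/-- The payoff of taking the action that the signal recommends. -/
def obedientPayoff [Fintype A] (φ : A × S → ℝ) (ρ : S → ℝ) (τ : A → S → ℝ) : ℝ :=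
  ∑ a, signalPayoff φ ρ τ a a

theorem obedientPayoff_le_expectedValue [Fintype A] [Nonempty A] (φ : A × S → ℝ) (ρ : S → ℝ)
    (τ : A → S → ℝ) : obedientPayoff φ ρ τ ≤ expectedValue φ ρ τ :=
  sum_le_sum fun a _ => le_sup' _ (mem_univ a)

theorem exists_expectedValue_eq_obedientPayoff [Fintype A] [Nonempty A]
    (φ : A × S → ℝ) (ρ : S → ℝ) (σ : D → S → ℝ) :
    ∃ τ ∈ garblings σ, expectedValue φ ρ σ = obedientPayoff φ ρ τ := by
  classical
  choose best hbest using fun d => exists_mem_eq_sup' univ_nonempty (signalPayoff φ ρ σ d)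
  refine ⟨garble σ fun d => Pi.single (best d) 1,
    ⟨_, fun d _ => single_mem_stdSimplex ℝ (best d), rfl⟩, ?_⟩
  simp only [expectedValue, obedientPayoff, signalPayoff_garble]
  rw [sum_comm]
  refine sum_congr rfl fun d _ => ?_
  simp [hbest d, Pi.single_apply]

theorem exists_obedientPayoff_eq [Fintype A] [Nonempty S] (f : (A → S → ℝ) →ₗ[ℝ] ℝ) :
    ∃ φ : A × S → ℝ, ∀ τ, f τ = obedientPayoff φ (fun _ => (Fintype.card S : ℝ)⁻¹) τ := by
  classical
  refine ⟨fun p => Fintype.card S * f (Pi.single p.1 (Pi.single p.2 1)), fun τ => ?_⟩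
  have hτ : τ = ∑ a, ∑ s, τ a s • Pi.single a (Pi.single s (1 : ℝ)) := by
    ext a s
    simp [Finset.sum_apply, Pi.single_apply, ite_apply]
  have hS : (Fintype.card S : ℝ) ≠ 0 := Nat.cast_ne_zero.2 Fintype.card_ne_zero
  conv_lhs => rw [hτ]
  simp only [map_sum, map_smul, smul_eq_mul, obedientPayoff, signalPayoff]
  refine sum_congr rfl fun a _ => sum_congr rfl fun s _ => ?_
  field_simp

theorem exists_expectedValue_lt_of_notMem_garblings [Fintype D'] [Nonempty D'] [Nonempty S]
    {σ : D → S → ℝ} {σ' : D' → S → ℝ} (h : σ' ∉ garblings σ) :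
    ∃ φ : D' × S → ℝ, expectedValue φ (fun _ => (Fintype.card S : ℝ)⁻¹) σ <
      expectedValue φ (fun _ => (Fintype.card S : ℝ)⁻¹) σ' := by
  classical
  obtain ⟨f, u, hf_lt, hlt_f⟩ :=
    geometric_hahn_banach_closed_point (convex_garblings σ) (isCompact_garblings σ).isClosed h
  obtain ⟨φ, hφ⟩ := exists_obedientPayoff_eq (f : (D' → S → ℝ) →ₗ[ℝ] ℝ)
  obtain ⟨τ, hτ, hστ⟩ := exists_expectedValue_eq_obedientPayoff φ _ σ
  refine ⟨φ, ?_⟩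
  calc expectedValue φ _ σ = f τ := by rw [hστ, ← hφ]; rfl
    _ < u := hf_lt τ hτ
    _ < f σ' := hlt_f
    _ = obedientPayoff φ _ σ' := hφ σ'
    _ ≤ expectedValue φ _ σ' := obedientPayoff_le_expectedValue φ _ σ'

end InformationStructure

open InformationStructure in
theorem blackwell_informativeness_general
    {S D D' : Type*} [Fintype S] [Nonempty S] [Fintype D]
    [Fintype D'] [Nonempty D']
    (σ : D → S → ℝ) (σ' : D' → S → ℝ) :
    (∃ κ : D → D' → ℝ,
      (∀ d d', 0 ≤ κ d d' ∧ κ d d' ≤ 1) ∧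
      (∀ d, ∑ d', κ d d' = 1) ∧
      (∀ d' s, σ' d' s = ∑ d, κ d d' * σ d s)) ↔
    (∀ (A : Type) [Fintype A] [Nonempty A] (φ : A × S → ℝ) (ρ : S → ℝ),
      (∀ s, 0 ≤ ρ s) → (∑ s, ρ s = 1) →
      ∑ d', Finset.univ.sup' Finset.univ_nonempty
          (fun a : A => ∑ s, φ (a, s) * σ' d' s * ρ s)
        ≤ ∑ d, Finset.univ.sup' Finset.univ_nonempty
          (fun a : A => ∑ s, φ (a, s) * σ d s * ρ s)) := by
  constructor
  · rintro ⟨κ, hκ, hκ_sum, hσ'⟩ A _ _ φ ρ - -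
    obtain rfl : σ' = garble σ κ := funext₂ hσ'
    exact expectedValue_garble_le φ ρ σ (fun d d' => (hκ d d').1) hκ_sum
  · intro hvalue
    by_contra hnot_garbling
    obtain ⟨φ, hlt⟩ := exists_expectedValue_lt_of_notMem_garblings
      (σ := σ) (σ' := σ') fun h => hnot_garbling (exists_kernel_of_mem_garblings h)
    let e := (Fintype.equivFin D').symm
    have : Nonempty (Fin (Fintype.card D')) := e.nonempty_congr.mpr ‹_›
    have hle : expectedValue (fun p => φ (e p.1, p.2)) _ σ' ≤
        expectedValue (fun p => φ (e p.1, p.2)) _ σ :=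
      hvalue (Fin (Fintype.card D')) (fun p => φ (e p.1, p.2)) (fun _ => (Fintype.card S : ℝ)⁻¹)
        (fun _ => by positivity) (by simp)
    rw [expectedValue_comp_equiv, expectedValue_comp_equiv] at hle
    exact hle.not_gt hlt

/-- Blackwell's informativeness theorem (finite case): (D', σ') is a
garbling of (D, σ) iff every Bayesian decision maker weakly prefers (D, σ). -/
theorem blackwell_informativeness
    {S D D' : Type*} [Fintype S] [Nonempty S] [Fintype D] [Nonempty D]
    [Fintype D'] [Nonempty D']
    (σ : D → S → ℝ) (hσ_nonneg : ∀ d s, 0 ≤ σ d s) (hσ_sum : ∀ s, ∑ d, σ d s = 1)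
    (σ' : D' → S → ℝ) (hσ'_nonneg : ∀ d' s, 0 ≤ σ' d' s) (hσ'_sum : ∀ s, ∑ d', σ' d' s = 1) :
    (∃ κ : D → D' → ℝ,
      (∀ d d', 0 ≤ κ d d' ∧ κ d d' ≤ 1) ∧
      (∀ d, ∑ d', κ d d' = 1) ∧
      (∀ d' s, σ' d' s = ∑ d, κ d d' * σ d s)) ↔
    (∀ (A : Type) [Fintype A] [Nonempty A] (φ : A × S → ℝ) (ρ : S → ℝ),
      (∀ s, 0 ≤ ρ s) → (∑ s, ρ s = 1) →
      ∑ d', Finset.univ.sup' Finset.univ_nonempty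
          (fun a : A => ∑ s, φ (a, s) * σ' d' s * ρ s)
        ≤ ∑ d, Finset.univ.sup' Finset.univ_nonempty
          (fun a : A => ∑ s, φ (a, s) * σ d s * ρ s)) :=
  blackwell_informativeness_general σ σ'
end
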